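/- Under the setting of the modal system pₙ' = nπqₙ, qₙ' = −nπ(1+σn²π²)pₙ − (μn²π²+κ)qₙ + (βₙ/(nπ))f(t) with |βₙ| ≤ 2√2, the functional Pₙ(t) = (1/2)n²π²qₙ² + n²π²(1+σn²π²)pₙ² + (1/2)n²π²(qₙ + ((μn²π²+κ)/(nπ))pₙ)² satisfies for a.e. t ∈ (0,T): Pₙ'(t) ≤ −((n²π²)/2)(μn²π²+κ)(qₙ² + (1+σn²π²)pₙ²) + (2/(μn²π²+κ) + (μn²π²+κ)/(2(1+σn²π²)n²π²)) βₙ² f(t)². -/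

import Mathlib

/-!
With `a = nπ`, `b = 1 + σn²π²`, `c = μn²π² + κ`, the `pq` cross terms of `Pₙ'` cancel along the
modal system, so that exactly `Pₙ' = -c a² (q² + b p²) + 2aβ q f + β c p f`. Young's inequality
`2xy ≤ εx² + ε⁻¹y²`, with `ε = c/2` for the `q f` term and `ε = a² b` for the `p f` term, absorbs
each forcing term into half of the dissipation.
-/

open MeasureTheory Set

/-- The modal Lyapunov functional Pₙ for the n-th Fourier mode
(pₙ, qₙ) of the closed-loop tank-liquid system. -/
noncomputable def Pmod (μ κ σ : ℝ) (n : ℕ) (p q : ℝ → ℝ) (t : ℝ) : ℝ :=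
  (1/2) * (n:ℝ)^2 * Real.pi^2 * (q t)^2
    + (n:ℝ)^2 * Real.pi^2 * (1 + σ * (n:ℝ)^2 * Real.pi^2) * (p t)^2
    + (1/2) * (n:ℝ)^2 * Real.pi^2
        * (q t + ((μ * (n:ℝ)^2 * Real.pi^2 + κ) / ((n:ℝ) * Real.pi)) * p t)^2

noncomputable def modalEnergy (a b c p q : ℝ) : ℝ :=
  a ^ 2 / 2 * q ^ 2 + a ^ 2 * b * p ^ 2 + a ^ 2 / 2 * (q + c / a * p) ^ 2

lemma Pmod_eq_modalEnergy (μ κ σ : ℝ) (n : ℕ) (p q : ℝ → ℝ) :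
    Pmod μ κ σ n p q = fun t ↦ modalEnergy ((n : ℝ) * Real.pi) (1 + σ * (n : ℝ) ^ 2 * Real.pi ^ 2)
      (μ * (n : ℝ) ^ 2 * Real.pi ^ 2 + κ) (p t) (q t) := by
  funext t
  simp only [Pmod, modalEnergy]
  ring

lemma hasDerivAt_modalEnergy {a b c β t : ℝ} {p q f : ℝ → ℝ} (ha : a ≠ 0)
    (hp : HasDerivAt p (a * q t) t)
    (hq : HasDerivAt q (-a * b * p t - c * q t + β / a * f t) t) :
    HasDerivAt (fun s ↦ modalEnergy a b c (p s) (q s))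
      (-c * a ^ 2 * (q t ^ 2 + b * p t ^ 2) + 2 * a * β * q t * f t + β * c * p t * f t) t := by
  have h : HasDerivAt (fun s ↦ modalEnergy a b c (p s) (q s)) _ t :=
    (((hq.fun_pow 2).const_mul (a ^ 2 / 2)).add ((hp.fun_pow 2).const_mul (a ^ 2 * b))).add
      (((hq.add (hp.const_mul (c / a))).fun_pow 2).const_mul (a ^ 2 / 2))
  convert h using 1
  simp only [Pi.add_apply, Nat.cast_ofNat, Nat.add_one_sub_one, pow_one]
  field_simp
  ring

lemma modalEnergy_rate_le {a b c β p q g : ℝ} (ha : 0 < a) (hb : 0 < b) (hc : 0 < c) :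
    -c * a ^ 2 * (q ^ 2 + b * p ^ 2) + 2 * a * β * q * g + β * c * p * g
      ≤ -(a ^ 2 / 2) * c * (q ^ 2 + b * p ^ 2)
        + (2 / c + c / (2 * b * a ^ 2)) * β ^ 2 * g ^ 2 := by
  have hq := two_mul_le_add_mul_sq (a := a * q) (b := β * g) (half_pos hc)
  have hp := two_mul_le_add_mul_sq (a := p) (b := β * g) (by positivity : 0 < a ^ 2 * b)
  have hp' := mul_le_mul_of_nonneg_left hp (half_pos hc).le
  have key : (2 / c + c / (2 * b * a ^ 2)) * β ^ 2 * g ^ 2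
      = (c / 2)⁻¹ * (β * g) ^ 2 + c / 2 * ((a ^ 2 * b)⁻¹ * (β * g) ^ 2) := by
    field_simp
  rw [key]
  linarith

theorem Pmod_dissipation_general (μ κ σ T : ℝ) (n : ℕ) (p q f : ℝ → ℝ)
    (hμ : 0 < μ) (hκ : 0 ≤ κ) (hσ : 0 < σ) (hn : 1 ≤ n)
    (hp : ∀ t ∈ Icc (0:ℝ) T, HasDerivAt p ((n:ℝ) * Real.pi * q t) t)
    (hq : ∀ᵐ t ∂(volume.restrict (Ioo (0:ℝ) T)), HasDerivAt q
      (-(n:ℝ) * Real.pi * (1 + σ * (n:ℝ)^2 * Real.pi^2) * p t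
        - (μ * (n:ℝ)^2 * Real.pi^2 + κ) * q t
        + (Real.sqrt 2 * ((-1:ℝ)^n - 1) / ((n:ℝ) * Real.pi)) * f t) t) :
    ∀ᵐ t ∂(volume.restrict (Ioo (0:ℝ) T)),
      ∃ d : ℝ, HasDerivAt (Pmod μ κ σ n p q) d t ∧
        d ≤ -((n:ℝ)^2 * Real.pi^2 / 2) * (μ * (n:ℝ)^2 * Real.pi^2 + κ)
              * ((q t)^2 + (1 + σ * (n:ℝ)^2 * Real.pi^2) * (p t)^2)
          + (2 / (μ * (n:ℝ)^2 * Real.pi^2 + κ)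
              + (μ * (n:ℝ)^2 * Real.pi^2 + κ)
                / (2 * (1 + σ * (n:ℝ)^2 * Real.pi^2) * (n:ℝ)^2 * Real.pi^2))
            * (Real.sqrt 2 * ((-1:ℝ)^n - 1))^2 * (f t)^2 := by
  filter_upwards [hq, ae_restrict_mem measurableSet_Ioo] with t hqt ht
  have ha : 0 < (n : ℝ) * Real.pi := mul_pos (by exact_mod_cast hn) Real.pi_pos
  have hb : 0 < 1 + σ * (n : ℝ) ^ 2 * Real.pi ^ 2 := by positivity
  have hc : 0 < μ * (n : ℝ) ^ 2 * Real.pi ^ 2 + κ := by positivity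
  have hE := hasDerivAt_modalEnergy (b := 1 + σ * (n : ℝ) ^ 2 * Real.pi ^ 2)
    (c := μ * (n : ℝ) ^ 2 * Real.pi ^ 2 + κ) (β := Real.sqrt 2 * ((-1 : ℝ) ^ n - 1)) (f := f)
    ha.ne' (hp t (Ioo_subset_Icc_self ht)) (hqt.congr_deriv (by ring))
  rw [← Pmod_eq_modalEnergy] at hE
  refine ⟨_, hE, (modalEnergy_rate_le ha hb hc).trans_eq ?_⟩
  ring

/-- dissipation inequality for the modal Lyapunov functional,
obtained by completing squares in its exact derivative. -/
theorem Pmod_dissipation (μ κ σ T : ℝ) (n : ℕ) (p q f : ℝ → ℝ)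
    (hμ : 0 < μ) (hκ : 0 ≤ κ) (hσ : 0 < σ) (hT : 0 < T) (hn : 1 ≤ n)
    (hf : MemLp f 2 (volume.restrict (Ioo (0:ℝ) T)))
    (hp : ∀ t ∈ Icc (0:ℝ) T, HasDerivAt p ((n:ℝ) * Real.pi * q t) t)
    (hq : ∀ᵐ t ∂(volume.restrict (Ioo (0:ℝ) T)), HasDerivAt q
      (-(n:ℝ) * Real.pi * (1 + σ * (n:ℝ)^2 * Real.pi^2) * p t
        - (μ * (n:ℝ)^2 * Real.pi^2 + κ) * q t
        + (Real.sqrt 2 * ((-1:ℝ)^n - 1) / ((n:ℝ) * Real.pi)) * f t) t) :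
    ∀ᵐ t ∂(volume.restrict (Ioo (0:ℝ) T)),
      ∃ d : ℝ, HasDerivAt (Pmod μ κ σ n p q) d t ∧
        d ≤ -((n:ℝ)^2 * Real.pi^2 / 2) * (μ * (n:ℝ)^2 * Real.pi^2 + κ)
              * ((q t)^2 + (1 + σ * (n:ℝ)^2 * Real.pi^2) * (p t)^2)
          + (2 / (μ * (n:ℝ)^2 * Real.pi^2 + κ)
              + (μ * (n:ℝ)^2 * Real.pi^2 + κ)
                / (2 * (1 + σ * (n:ℝ)^2 * Real.pi^2) * (n:ℝ)^2 * Real.pi^2))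
            * (Real.sqrt 2 * ((-1:ℝ)^n - 1))^2 * (f t)^2 :=
  Pmod_dissipation_general μ κ σ T n p q f hμ hκ hσ hn hp hq
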